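/- arXiv:2601.13135 — 3 statements merged into one kernel-verified Lean document; each statement's English description precedes it below -/
import Mathlib

section
/- Let (X,d) be a metric space and let δ be its canonical arc-pseudo-metric. Then: (i) δ(x,x) = 0 for all x; (ii) δ(x,y) ≥ d(x,y) for all x,y (so δ(x,y) = 0 implies x = y); (iii) δ(x,y) = δ(y,x) for all x,y; (iv) δ(x,z) ≤ δ(x,y) + δ(y,z) for all x,y,z (with the convention α + ∞ = ∞); and (v) if (X,d) is complete then (X,δ) is complete, i.e. every sequence (xₙ) in X such that for every ε > 0 there is N with δ(xₘ,xₙ) < ε for all m,n ≥ N, has a point x with δ(xₙ,x) → 0. -/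
open Set TopologicalSpace MeasureTheory
open scoped ENNReal

/-- An arc in a topological space with endpoints `a` and `b`: the range of a continuous
injective map from the unit interval sending `0` to `a` and `1` to `b`. -/
def IsArcWith {X : Type*} [TopologicalSpace X] (J : Set X) (a b : X) : Prop :=
  ∃ f : unitInterval → X, Continuous f ∧ Function.Injective f ∧
    Set.range f = J ∧ f 0 = a ∧ f 1 = b

/-- An arc: a set which is the range of a continuous injective map from the unit interval. -/
def IsArc {X : Type*} [TopologicalSpace X] (J : Set X) : Prop :=
  ∃ a b, IsArcWith J a b

/-- A set `S` is arc-connected if any two distinct points of `S` are the endpoints of an arc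
contained in `S`. -/
def ArcConnected {X : Type*} [TopologicalSpace X] (S : Set X) : Prop :=
  ∀ x ∈ S, ∀ y ∈ S, x ≠ y → ∃ J, J ⊆ S ∧ IsArcWith J x y

/-- The canonical arc-pseudo-metric of a metric space:
`δ(x,y) = inf { diam H : H arc-connected, {x,y} ⊆ H ⊆ X }`, with `inf ∅ = ∞`. -/
noncomputable def arcDelta {X : Type*} [MetricSpace X] (x y : X) : ℝ≥0∞ :=
  sInf (EMetric.diam '' {H : Set X | ArcConnected H ∧ x ∈ H ∧ y ∈ H})

/-!
Everything except completeness is formal: `d x y ≤ diam H` for every admissible `H`, and the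
union of two arc-connected sets sharing a point is arc-connected (follow an arc of the first set
until it first meets an arc of the second, then continue along the latter), which gives the
triangle inequality.

A `δ`-Cauchy sequence is `d`-Cauchy, so it `d`-converges to some `x`. Along a subsequence with
`δ (v k) (v (k + 1)) < ε 2⁻ᵏ⁻²` choose arc-connected `H k ∋ v k, v (k + 1)` of diameter
`< ε 2⁻ᵏ⁻²`; everything then lies in the closed ball of radius `ε / 2` about `v 0`, and it remains
to see that `{x} ∪ ⋃ H k` is arc-connected. Shrinking each `H k` to a closed arc `K k`, an arc
to `x` is built greedily: from a point of `K m` lying in no later `K i`, follow an arc of `K m`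
until it first meets `K m'`, where `m'` is the last index with `K m' ∩ K m ≠ ∅` (there are finitely
many since `K m` is closed and avoids `x`). Each segment meets later ones only at its end point,
and the segments shrink to `x`, so placing them on `[1 - 2⁻ʲ, 1 - 2⁻ʲ⁻¹]` gives an arc.
-/

open Filter Topology

theorem injOn_ite_le {X : Type*} {F G : ℝ → X} {r s t : ℝ} (hF : InjOn F (Icc r s))
    (hG : InjOn G (Icc s t)) (h : F '' Icc r s ∩ G '' Icc s t ⊆ {G s}) :
    InjOn (fun u => if u ≤ s then F u else G u) (Icc r t) := by
  have hmixed : ∀ u ∈ Icc r t, ∀ v ∈ Icc r t, u ≤ s → s < v → F u ≠ G v := by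
    intro u hu v hv hus hsv huv
    have hGv : G v = G s := h ⟨⟨u, ⟨hu.1, hus⟩, huv⟩, v, ⟨hsv.le, hv.2⟩, rfl⟩
    exact hsv.ne' (hG ⟨hsv.le, hv.2⟩ ⟨le_rfl, hsv.le.trans hv.2⟩ hGv)
  intro u hu v hv huv
  dsimp only at huv
  split_ifs at huv with hus hvs hvs
  · exact hF ⟨hu.1, hus⟩ ⟨hv.1, hvs⟩ huv
  · exact absurd huv (hmixed u hu v hv hus (not_le.1 hvs))
  · exact absurd huv.symm (hmixed v hv u hu hvs (not_le.1 hus))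
  · exact hG ⟨(not_le.1 hus).le, hu.2⟩ ⟨(not_le.1 hvs).le, hv.2⟩ huv

theorem image_ite_le {X : Type*} {F G : ℝ → X} {r s t : ℝ} (hrs : r ≤ s) (hst : s ≤ t)
    (hFG : F s = G s) :
    (fun u => if u ≤ s then F u else G u) '' Icc r t = F '' Icc r s ∪ G '' Icc s t := by
  ext y
  constructor
  · rintro ⟨u, hu, rfl⟩
    dsimp only
    split_ifs with hus
    · exact Or.inl ⟨u, ⟨hu.1, hus⟩, rfl⟩
    · exact Or.inr ⟨u, ⟨(not_le.1 hus).le, hu.2⟩, rfl⟩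
  · rintro (⟨u, hu, rfl⟩ | ⟨u, hu, rfl⟩)
    · exact ⟨u, ⟨hu.1, hu.2.trans hst⟩, if_pos hu.2⟩
    · refine ⟨u, ⟨hrs.trans hu.1, hu.2⟩, ?_⟩
      dsimp only
      split_ifs with hus
      · rw [le_antisymm hus hu.1, hFG]
      · rfl

section Arcs

variable {X : Type*} [TopologicalSpace X]

theorem IsArcWith.symm {J : Set X} {a b : X} (h : IsArcWith J a b) : IsArcWith J b a := by
  obtain ⟨f, hc, hi, hr, h0, h1⟩ := h
  refine ⟨f ∘ unitInterval.symm, hc.comp unitInterval.continuous_symm,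
    hi.comp unitInterval.symm_bijective.injective, ?_, by simpa, by simpa⟩
  rw [range_comp, unitInterval.symm_bijective.surjective.range_eq, image_univ, hr]

theorem IsArcWith.isCompact {J : Set X} {a b : X} (h : IsArcWith J a b) : IsCompact J := by
  obtain ⟨f, hc, -, rfl, -⟩ := h
  exact isCompact_range hc

theorem isArcWith_image_Icc {F : ℝ → X} {s t : ℝ} (hst : s < t) (hc : ContinuousOn F (Icc s t))
    (hi : InjOn F (Icc s t)) : IsArcWith (F '' Icc s t) (F s) (F t) := by
  let e := (iccHomeoI s t hst).symm
  refine ⟨fun u => F (e u), hc.comp_continuous (continuous_subtype_val.comp e.continuous)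
    (fun u => (e u).2), fun u v huv => e.injective (Subtype.ext (hi (e u).2 (e v).2 huv)), ?_,
    by simp [e], by simp [e]⟩
  rw [image_eq_range, ← e.surjective.range_comp]
  rfl

theorem IsArcWith.exists_param {J : Set X} {a b : X} (h : IsArcWith J a b) {s t : ℝ}
    (hst : s < t) :
    ∃ F : ℝ → X, Continuous F ∧ InjOn F (Icc s t) ∧ F '' Icc s t = J ∧ range F = J ∧
      F s = a ∧ F t = b := by
  obtain ⟨f, hc, hi, rfl, h0, h1⟩ := h
  let e := iccHomeoI s t hst
  refine ⟨IccExtend hst.le (f ∘ e), (hc.comp e.continuous).Icc_extend', ?_, ?_, ?_, ?_, ?_⟩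
  · intro u hu v hv huv
    rw [IccExtend_of_mem _ _ hu, IccExtend_of_mem _ _ hv] at huv
    exact congrArg Subtype.val (e.injective (hi huv))
  · rw [image_eq_range]
    simp only [IccExtend_of_mem _ _ (Subtype.prop _)]
    exact (range_comp f e).trans (by rw [e.surjective.range_eq, image_univ])
  · rw [IccExtend_range, range_comp, e.surjective.range_eq, image_univ]
  · rw [IccExtend_left, Function.comp_apply, ← h0]; congr; ext; simp [e]
  · rw [IccExtend_right, Function.comp_apply, ← h1]; congr; ext; simp [e, (sub_pos.2 hst).ne']

theorem IsArcWith.left_mem {J : Set X} {a b : X} (h : IsArcWith J a b) : a ∈ J := by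
  obtain ⟨f, -, -, rfl, h0, -⟩ := h
  exact ⟨0, h0⟩

theorem IsArcWith.right_mem {J : Set X} {a b : X} (h : IsArcWith J a b) : b ∈ J :=
  h.symm.left_mem

theorem arcConnected_singleton (p : X) : ArcConnected ({p} : Set X) :=
  fun _ ha _ hb hab => absurd (ha.trans hb.symm) hab

theorem IsArcWith.arcConnected {J : Set X} {a b : X} (h : IsArcWith J a b) : ArcConnected J := by
  obtain ⟨F, hc, hi, himg, -⟩ := h.exists_param zero_lt_one
  rintro p hp q hq hpq
  rw [← himg] at hp hq ⊢
  obtain ⟨s, hs, rfl⟩ := hp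
  obtain ⟨t, ht, rfl⟩ := hq
  have hsub : ∀ {u v : ℝ}, u ∈ Icc (0 : ℝ) 1 → v ∈ Icc (0 : ℝ) 1 → Icc u v ⊆ Icc 0 1 :=
    fun hu hv => Icc_subset_Icc hu.1 hv.2
  rcases lt_or_gt_of_ne (fun hst : s = t => hpq (hst ▸ rfl)) with hst | hts
  · exact ⟨_, image_mono (hsub hs ht),
      isArcWith_image_Icc hst hc.continuousOn (hi.mono (hsub hs ht))⟩
  · exact ⟨_, image_mono (hsub ht hs),
      (isArcWith_image_Icc hts hc.continuousOn (hi.mono (hsub ht hs))).symm⟩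

theorem IsArcWith.exists_subarc_to_closed {J C : Set X} {a b : X} (h : IsArcWith J a b)
    (hC : IsClosed C) (ha : a ∉ C) (hb : b ∈ C) :
    ∃ w ∈ C, ∃ J' ⊆ J, IsArcWith J' a w ∧ J' ∩ C ⊆ {w} := by
  obtain ⟨F, hc, hi, himg, -, h0, h1⟩ := h.exists_param zero_lt_one
  set T := Icc (0 : ℝ) 1 ∩ F ⁻¹' C
  have hTbdd : BddBelow T := ⟨0, fun t ht => ht.1.1⟩
  have h1T : (1 : ℝ) ∈ T := ⟨right_mem_Icc.2 zero_le_one, by rwa [mem_preimage, h1]⟩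
  have hτT : sInf T ∈ T :=
    (isClosed_Icc.inter (hC.preimage hc)).csInf_mem ⟨1, h1T⟩ hTbdd
  have hτ0 : 0 < sInf T :=
    hτT.1.1.lt_of_ne fun h => ha (h0 ▸ h ▸ hτT.2)
  have hsub : Icc 0 (sInf T) ⊆ Icc 0 1 := Icc_subset_Icc_right hτT.1.2
  refine ⟨F (sInf T), hτT.2, F '' Icc 0 (sInf T), himg ▸ image_mono hsub, ?_, ?_⟩
  · simpa [h0] using isArcWith_image_Icc hτ0 hc.continuousOn (hi.mono hsub)
  · rintro _ ⟨⟨u, hu, rfl⟩, huC⟩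
    rw [le_antisymm hu.2 (csInf_le hTbdd ⟨hsub hu, huC⟩)]
    rfl

theorem IsArcWith.union {J₁ J₂ : Set X} {a b c : X} (h₁ : IsArcWith J₁ a b)
    (h₂ : IsArcWith J₂ b c) (h : J₁ ∩ J₂ ⊆ {b}) : IsArcWith (J₁ ∪ J₂) a c := by
  obtain ⟨F, hFc, hFi, hF, -, hF0, hF1⟩ := h₁.exists_param zero_lt_one
  obtain ⟨G, hGc, hGi, hG, -, hG1, hG2⟩ := h₂.exists_param one_lt_two
  have hFG : F 1 = G 1 := hF1.trans hG1.symm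
  have hc : Continuous fun u : ℝ => if u ≤ 1 then F u else G u :=
    hFc.if_le hGc continuous_id continuous_const fun u hu => hu ▸ hFG
  have := isArcWith_image_Icc zero_lt_two hc.continuousOn
    (injOn_ite_le hFi hGi (by rwa [hF, hG, hG1]))
  rwa [image_ite_le zero_le_one one_le_two hFG, hF, hG, if_pos zero_le_one,
    if_neg (by norm_num), hF0, hG2] at this

end Arcs

section ArcConnected

variable {X : Type*} [TopologicalSpace X] [T2Space X]

theorem ArcConnected.exists_isArcWith_of_mem_inter {A B : Set X} (hA : ArcConnected A)
    (hB : ArcConnected B) {p q y : X} (hp : p ∈ A) (hq : q ∈ B) (hyA : y ∈ A) (hyB : y ∈ B)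
    (hpq : p ≠ q) : ∃ J ⊆ A ∪ B, IsArcWith J p q := by
  by_cases hpB : p ∈ B
  · obtain ⟨J, hJ, h⟩ := hB p hpB q hq hpq
    exact ⟨J, hJ.trans subset_union_right, h⟩
  by_cases hqA : q ∈ A
  · obtain ⟨J, hJ, h⟩ := hA p hp q hqA hpq
    exact ⟨J, hJ.trans subset_union_left, h⟩
  obtain ⟨J₁, hJ₁A, hJ₁⟩ := hA p hp y hyA fun h => hpB (h ▸ hyB)
  obtain ⟨J₂, hJ₂B, hJ₂⟩ := hB y hyB q hq fun h => hqA (h ▸ hyA)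
  obtain ⟨w, hwJ₂, J₁', hJ₁'J₁, hJ₁', hinter⟩ :=
    hJ₁.exists_subarc_to_closed hJ₂.isCompact.isClosed (fun hp => hpB (hJ₂B hp)) hJ₂.left_mem
  rcases eq_or_ne w q with rfl | hwq
  · exact ⟨J₁', hJ₁'J₁.trans (hJ₁A.trans subset_union_left), hJ₁'⟩
  obtain ⟨J₂', hJ₂'J₂, hJ₂'⟩ := hJ₂.arcConnected w hwJ₂ q hJ₂.right_mem hwq
  exact ⟨J₁' ∪ J₂', union_subset_union (hJ₁'J₁.trans hJ₁A) (hJ₂'J₂.trans hJ₂B),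
    hJ₁'.union hJ₂' ((inter_subset_inter_right _ hJ₂'J₂).trans hinter)⟩

theorem ArcConnected.union {A B : Set X} (hA : ArcConnected A) (hB : ArcConnected B)
    (hAB : (A ∩ B).Nonempty) : ArcConnected (A ∪ B) := by
  obtain ⟨y, hyA, hyB⟩ := hAB
  rintro p (hp | hp) q (hq | hq) hpq
  · obtain ⟨J, hJ, h⟩ := hA p hp q hq hpq
    exact ⟨J, hJ.trans subset_union_left, h⟩
  · exact hA.exists_isArcWith_of_mem_inter hB hp hq hyA hyB hpq
  · obtain ⟨J, hJ, h⟩ := hA.exists_isArcWith_of_mem_inter hB hq hp hyA hyB hpq.symm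
    exact ⟨J, hJ, h.symm⟩
  · obtain ⟨J, hJ, h⟩ := hB p hp q hq hpq
    exact ⟨J, hJ.trans subset_union_right, h⟩

theorem arcConnected_iUnion_of_chain {H : ℕ → Set X} (hH : ∀ n, ArcConnected (H n))
    (hchain : ∀ n, (H n ∩ H (n + 1)).Nonempty) : ArcConnected (⋃ n, H n) := by
  have hacc : ∀ n, ArcConnected (accumulate H n) := by
    intro n
    induction n with
    | zero => simpa [accumulate_zero_nat] using hH 0
    | succ n ih =>
      rw [accumulate_succ]
      exact ih.union (hH _) ((hchain n).mono (inter_subset_inter_left _ subset_accumulate))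
  rintro p hp q hq hpq
  obtain ⟨i, hi⟩ := mem_iUnion.1 hp
  obtain ⟨j, hj⟩ := mem_iUnion.1 hq
  obtain ⟨J, hJ, h⟩ := hacc (max i j) p (monotone_accumulate (le_max_left i j)
    (subset_accumulate hi)) q (monotone_accumulate (le_max_right i j) (subset_accumulate hj)) hpq
  exact ⟨J, hJ.trans (accumulate_subset_iUnion _), h⟩

end ArcConnected

section Concat

variable {X : Type*} {a : ℕ → ℝ} {c : ℕ → ℝ → X}

noncomputable def concatSeq (a : ℕ → ℝ) (c : ℕ → ℝ → X) : ℕ → ℝ → X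
  | 0 => c 0
  | n + 1 => fun t => if t ≤ a (n + 1) then concatSeq a c n t else c (n + 1) t

theorem concatSeq_succ (n : ℕ) (t : ℝ) : concatSeq a c (n + 1) t =
    if t ≤ a (n + 1) then concatSeq a c n t else c (n + 1) t :=
  rfl

theorem concatSeq_of_le (ha : Monotone a) {n m : ℕ} {t : ℝ} (ht : t ≤ a (n + 1)) (hnm : n ≤ m) :
    concatSeq a c m t = concatSeq a c n t := by
  induction m, hnm using Nat.le_induction with
  | base => rfl
  | succ m hnm ih => exact (if_pos (ht.trans (ha (by omega)))).trans ih

theorem concatSeq_of_ge (ha : Monotone a) (hjoin : ∀ n, c n (a (n + 1)) = c (n + 1) (a (n + 1)))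
    {n : ℕ} {t : ℝ} (ht : a n ≤ t) : concatSeq a c n t = c n t := by
  induction n generalizing t with
  | zero => rfl
  | succ n ih =>
    by_cases hle : t ≤ a (n + 1)
    · rw [concatSeq_succ, if_pos hle, le_antisymm hle ht, ih (ha n.le_succ), hjoin]
    · exact if_neg hle

theorem continuous_concatSeq [TopologicalSpace X] (ha : Monotone a) (hc : ∀ n, Continuous (c n))
    (hjoin : ∀ n, c n (a (n + 1)) = c (n + 1) (a (n + 1))) (n : ℕ) :
    Continuous (concatSeq a c n) := by
  induction n with
  | zero => exact hc 0
  | succ n ih =>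
    refine ih.if_le (hc _) continuous_id continuous_const fun t ht => ?_
    rw [ht, concatSeq_of_ge ha hjoin (ha n.le_succ), hjoin]

theorem image_concatSeq (ha : Monotone a) (hjoin : ∀ n, c n (a (n + 1)) = c (n + 1) (a (n + 1)))
    (n : ℕ) :
    concatSeq a c n '' Icc (a 0) (a (n + 1)) = ⋃ m ≤ n, c m '' Icc (a m) (a (m + 1)) := by
  induction n with
  | zero => simp [concatSeq]
  | succ n ih =>
    rw [biUnion_le_succ, ← ih]
    exact image_ite_le (ha (Nat.zero_le _)) (ha (n + 1).le_succ)
      ((concatSeq_of_ge ha hjoin (ha n.le_succ)).trans (hjoin n))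

theorem injOn_concatSeq (ha : Monotone a) (hjoin : ∀ n, c n (a (n + 1)) = c (n + 1) (a (n + 1)))
    (hinj : ∀ n, InjOn (c n) (Icc (a n) (a (n + 1))))
    (hdisj : ∀ m n, m < n →
      c m '' Icc (a m) (a (m + 1)) ∩ c n '' Icc (a n) (a (n + 1)) ⊆ {c n (a n)}) (n : ℕ) :
    InjOn (concatSeq a c n) (Icc (a 0) (a (n + 1))) := by
  induction n with
  | zero => exact hinj 0
  | succ n ih =>
    refine injOn_ite_le ih (hinj _) ?_
    rw [image_concatSeq ha hjoin, iUnion₂_inter]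
    exact iUnion₂_subset fun m hm => hdisj m (n + 1) (by omega)

theorem concatSeq_mem_range (ha : Monotone a)
    (hjoin : ∀ n, c n (a (n + 1)) = c (n + 1) (a (n + 1))) {k n : ℕ} {t : ℝ} (hkn : k ≤ n)
    (ht : a k ≤ t) : ∃ m, k ≤ m ∧ concatSeq a c n t ∈ range (c m) := by
  induction n with
  | zero => exact ⟨0, hkn, t, rfl⟩
  | succ n ih =>
    by_cases hle : a (n + 1) ≤ t
    · exact ⟨n + 1, hkn, t, (concatSeq_of_ge ha hjoin hle).symm⟩
    · have hkn' : k ≤ n := by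
        by_contra h
        exact hle (le_of_eq_of_le (by congr 1; omega) ht)
      rw [concatSeq_succ, if_pos (not_le.1 hle).le]
      exact ih hkn'

open Classical in
noncomputable def concatLim (a : ℕ → ℝ) (c : ℕ → ℝ → X) (x : X) (t : ℝ) : X :=
  if h : ∃ n, t ≤ a (n + 1) then concatSeq a c (Nat.find h) t else x

theorem concatLim_eq (ha : Monotone a) {x : X} {n : ℕ} {t : ℝ} (ht : t ≤ a (n + 1)) :
    concatLim a c x t = concatSeq a c n t := by
  have h : ∃ n, t ≤ a (n + 1) := ⟨n, ht⟩
  rw [concatLim, dif_pos h]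
  exact (concatSeq_of_le ha (Nat.find_spec h) (Nat.find_min' h ht)).symm

theorem concatLim_of_forall_lt {x : X} {t : ℝ} (ht : ∀ n, a (n + 1) < t) :
    concatLim a c x t = x :=
  dif_neg fun ⟨n, hn⟩ => (ht n).not_ge hn

theorem continuous_concatLim [TopologicalSpace X] (ha : StrictMono a) (hc : ∀ n, Continuous (c n))
    (hjoin : ∀ n, c n (a (n + 1)) = c (n + 1) (a (n + 1))) {x : X}
    (hlim : Tendsto (fun n => range (c n)) atTop (𝓝 x).smallSets) :
    Continuous (concatLim a c x) := by
  refine continuous_iff_continuousAt.2 fun t₀ => ?_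
  by_cases h : ∃ n, t₀ < a (n + 1)
  · obtain ⟨n, hn⟩ := h
    refine (continuous_concatSeq ha.monotone hc hjoin n).continuousAt.congr ?_
    filter_upwards [Iio_mem_nhds hn] with t ht
    exact (concatLim_eq ha.monotone ht.le).symm
  push Not at h
  rw [ContinuousAt, concatLim_of_forall_lt fun n => (ha (n + 1).lt_succ_self).trans_le (h _)]
  intro U hU
  rw [mem_map]
  obtain ⟨N, hN⟩ := eventually_atTop.1 (tendsto_smallSets_iff.1 hlim U hU)
  filter_upwards [Ioi_mem_nhds ((ha N.lt_succ_self).trans_le (h N))] with t ht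
  by_cases ht' : ∃ n, t ≤ a (n + 1)
  · obtain ⟨n, hn⟩ := ht'
    obtain ⟨m, hNm, hm⟩ := concatSeq_mem_range (c := c) ha.monotone hjoin (le_max_right n N) ht.le
    rw [mem_preimage, concatLim_eq (n := max n N) ha.monotone (hn.trans (ha.monotone (by omega)))]
    exact hN m hNm hm
  · push Not at ht'
    rw [mem_preimage, concatLim_of_forall_lt ht']
    exact mem_of_mem_nhds hU

theorem exists_concatLim_eq (ha : StrictMono a) (hsup : ∀ t < 1, ∃ n, t ≤ a n) (x : X) {t : ℝ}
    (ht : t < 1) :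
    ∃ n, t ≤ a (n + 1) ∧ concatLim a c x t = concatSeq a c n t := by
  obtain ⟨n, hn⟩ := hsup t ht
  have hn' : t ≤ a (n + 1) := hn.trans (ha.monotone n.le_succ)
  exact ⟨n, hn', concatLim_eq ha.monotone hn'⟩

theorem image_concatLim (ha : StrictMono a) (hlt : ∀ n, a n < 1) (hsup : ∀ t < 1, ∃ n, t ≤ a n)
    (hjoin : ∀ n, c n (a (n + 1)) = c (n + 1) (a (n + 1))) (x : X) :
    concatLim a c x '' Icc (a 0) 1 = insert x (⋃ n, c n '' Icc (a n) (a (n + 1))) := by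
  have hIcc : Icc (a 0) 1 = insert 1 (⋃ n, Icc (a 0) (a (n + 1))) := by
    ext t
    simp only [mem_Icc, mem_insert_iff, mem_iUnion]
    constructor
    · rintro ⟨h0, h1⟩
      rcases h1.eq_or_lt with rfl | h1
      · exact Or.inl rfl
      · obtain ⟨n, hn, -⟩ := exists_concatLim_eq ha hsup x (c := c) h1
        exact Or.inr ⟨n, h0, hn⟩
    · rintro (rfl | ⟨n, h0, hn⟩)
      · exact ⟨(hlt 0).le, le_rfl⟩
      · exact ⟨h0, hn.trans (hlt _).le⟩
  have hpiece : ∀ n, concatLim a c x '' Icc (a 0) (a (n + 1)) = accumulate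
      (fun m => c m '' Icc (a m) (a (m + 1))) n := fun n => by
    rw [accumulate_def, ← image_concatSeq ha.monotone hjoin]
    exact image_congr fun t ht => concatLim_eq ha.monotone ht.2
  rw [hIcc, image_insert_eq, image_iUnion, concatLim_of_forall_lt fun n => hlt _]
  simp only [hpiece, iUnion_accumulate]

theorem injOn_concatLim (ha : StrictMono a) (hlt : ∀ n, a n < 1) (hsup : ∀ t < 1, ∃ n, t ≤ a n)
    (hjoin : ∀ n, c n (a (n + 1)) = c (n + 1) (a (n + 1)))
    (hinj : ∀ n, InjOn (c n) (Icc (a n) (a (n + 1))))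
    (hdisj : ∀ m n, m < n →
      c m '' Icc (a m) (a (m + 1)) ∩ c n '' Icc (a n) (a (n + 1)) ⊆ {c n (a n)})
    {x : X} (hx : ∀ n, x ∉ c n '' Icc (a n) (a (n + 1))) :
    InjOn (concatLim a c x) (Icc (a 0) 1) := by
  have hne : ∀ t ∈ Icc (a 0) 1, t < 1 → concatLim a c x t ≠ x := by
    intro t ht ht1 hxt
    obtain ⟨n, hn, heq⟩ := exists_concatLim_eq ha hsup x (c := c) ht1
    have hmem : concatSeq a c n t ∈ ⋃ m ≤ n, c m '' Icc (a m) (a (m + 1)) :=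
      image_concatSeq ha.monotone hjoin n ▸ mem_image_of_mem _ ⟨ht.1, hn⟩
    obtain ⟨m, -, hm⟩ := mem_iUnion₂.1 hmem
    exact hx m (hxt ▸ heq ▸ hm)
  intro s hs t ht hst
  rcases hs.2.eq_or_lt with rfl | hs1 <;> rcases ht.2.eq_or_lt with rfl | ht1
  · rfl
  · exact absurd (hst.symm.trans (concatLim_of_forall_lt fun n => hlt _)) (hne t ht ht1)
  · exact absurd (hst.trans (concatLim_of_forall_lt fun n => hlt _)) (hne s hs hs1)
  obtain ⟨m, hsm, -⟩ := exists_concatLim_eq ha hsup x (c := c) hs1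
  obtain ⟨n, htn, -⟩ := exists_concatLim_eq ha hsup x (c := c) ht1
  have hs' : s ≤ a (max m n + 1) := hsm.trans (ha.monotone (by omega))
  have ht' : t ≤ a (max m n + 1) := htn.trans (ha.monotone (by omega))
  rw [concatLim_eq ha.monotone hs', concatLim_eq ha.monotone ht'] at hst
  exact injOn_concatSeq ha.monotone hjoin hinj hdisj _ ⟨hs.1, hs'⟩ ⟨ht.1, ht'⟩ hst

theorem isArcWith_insert_iUnion [TopologicalSpace X] {J : ℕ → Set X} {w : ℕ → X} {x : X}
    (hJ : ∀ n, IsArcWith (J n) (w n) (w (n + 1))) (hdisj : ∀ m n, m < n → J m ∩ J n ⊆ {w n})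
    (hx : ∀ n, x ∉ J n) (hlim : Tendsto J atTop (𝓝 x).smallSets) :
    IsArcWith (insert x (⋃ n, J n)) (w 0) x := by
  set a : ℕ → ℝ := fun n => 1 - 2⁻¹ ^ n
  have ha : StrictMono a := fun m n hmn =>
    sub_lt_sub_left (pow_lt_pow_right_of_lt_one₀ (by norm_num) (by norm_num) hmn) 1
  have hlt : ∀ n, a n < 1 := fun n => sub_lt_self 1 (by positivity)
  have hsup : ∀ t < 1, ∃ n, t ≤ a n := fun t ht =>
    (exists_pow_lt_of_lt_one (sub_pos.2 ht) (by norm_num : (2⁻¹ : ℝ) < 1)).imp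
      fun n hn => by simp only [a]; linarith
  choose c hc hinj himg hrange hc0 hc1 using fun n => (hJ n).exists_param (ha n.lt_succ_self)
  have hjoin : ∀ n, c n (a (n + 1)) = c (n + 1) (a (n + 1)) := fun n => (hc1 n).trans (hc0 _).symm
  have hrange' : (fun n => range (c n)) = J := funext hrange
  have harc := isArcWith_image_Icc (hlt 0)
    (continuous_concatLim ha hc hjoin (hrange' ▸ hlim)).continuousOn
    (injOn_concatLim ha hlt hsup hjoin hinj
      (fun m n hmn => by rw [himg, himg, hc0]; exact hdisj m n hmn) (fun n => himg n ▸ hx n))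
  rwa [image_concatLim ha hlt hsup hjoin,
    concatLim_eq (n := 0) ha.monotone (ha.monotone (Nat.zero_le 1)),
    concatLim_of_forall_lt fun n => hlt _, concatSeq, hc0, funext himg] at harc

end Concat

section ChainToLimit

variable {X : Type*} [TopologicalSpace X] {K : ℕ → Set X} {x : X}

theorem bddAbove_setOf_inter_nonempty {C : Set X} (hC : IsClosed C) (hxC : x ∉ C)
    (hlim : Tendsto K atTop (𝓝 x).smallSets) : BddAbove {i | (C ∩ K i).Nonempty} := by
  obtain ⟨N, hN⟩ :=
    eventually_atTop.1 (tendsto_smallSets_iff.1 hlim _ (hC.isOpen_compl.mem_nhds hxC))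
  refine ⟨N, fun i ⟨y, hyC, hyK⟩ => not_lt.1 fun hi => hN i hi.le hyK hyC⟩

theorem exists_subarc_to_last_meeting (hK : ∀ n, ArcConnected (K n))
    (hKc : ∀ n, IsClosed (K n)) (hchain : ∀ n, (K n ∩ K (n + 1)).Nonempty) (hx : ∀ n, x ∉ K n)
    (hlim : Tendsto K atTop (𝓝 x).smallSets) {m : ℕ} {w : X} (hw : w ∈ K m)
    (hw' : ∀ i, m < i → w ∉ K i) :
    ∃ m' w' A, m < m' ∧ w' ∈ K m' ∧ A ⊆ K m ∧ IsArcWith A w w' ∧ A ∩ K m' ⊆ {w'} ∧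
      ∀ i, m' < i → Disjoint A (K i) := by
  set S := {i | (K m ∩ K i).Nonempty}
  have hS : BddAbove S := bddAbove_setOf_inter_nonempty (hKc m) (hx m) hlim
  have hmS : m + 1 ∈ S := hchain m
  have hmm' : m < sSup S := le_csSup hS hmS
  obtain ⟨y, hyK, hyK'⟩ : sSup S ∈ S := Nat.sSup_mem ⟨_, hmS⟩ hS
  obtain ⟨A₀, hA₀, harc⟩ :=
    hK m w hw y hyK fun hwy => hw' _ hmm' (hwy ▸ hyK')
  obtain ⟨w', hw'K, A, hAA₀, hA, hAK⟩ :=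
    harc.exists_subarc_to_closed (hKc _) (hw' _ hmm') hyK'
  refine ⟨sSup S, w', A, hmm', hw'K, hAA₀.trans hA₀, hA, hAK, fun i hi => ?_⟩
  refine disjoint_iff_inter_eq_empty.2 (subset_empty_iff.1 fun z hz => ?_)
  exact notMem_of_csSup_lt hi hS ⟨z, hA₀ (hAA₀ hz.1), hz.2⟩

theorem exists_seq_subarc_to_last_meeting (hK : ∀ n, ArcConnected (K n))
    (hKc : ∀ n, IsClosed (K n)) (hchain : ∀ n, (K n ∩ K (n + 1)).Nonempty) (hx : ∀ n, x ∉ K n)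
    (hlim : Tendsto K atTop (𝓝 x).smallSets) {p : X} (hp : p ∈ K 0) :
    ∃ (m : ℕ → ℕ) (w : ℕ → X) (J : ℕ → Set X), StrictMono m ∧ w 0 = p ∧ ∀ j,
      J j ⊆ K (m j) ∧ IsArcWith (J j) (w j) (w (j + 1)) ∧ J j ∩ K (m (j + 1)) ⊆ {w (j + 1)} ∧
        ∀ i, m (j + 1) < i → Disjoint (J j) (K i) := by
  choose! nm nw A hlt hmem hsub harc hhit hdisj using
    fun m w (hw : w ∈ K m) (hw' : ∀ i, m < i → w ∉ K i) =>
      exists_subarc_to_last_meeting hK hKc hchain hx hlim hw hw'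
  have hS : BddAbove {i | p ∈ K i} :=
    (bddAbove_setOf_inter_nonempty (hKc 0) (hx 0) hlim).mono fun i hi =>
      show (K 0 ∩ K i).Nonempty from ⟨p, hp, hi⟩
  set st : ℕ → ℕ × X := fun j => (fun s => (nm s.1 s.2, nw s.1 s.2))^[j] (sSup {i | p ∈ K i}, p)
  have hst : ∀ j, st (j + 1) = (nm (st j).1 (st j).2, nw (st j).1 (st j).2) := fun j =>
    Function.iterate_succ_apply' _ _ _
  have hinv : ∀ j, (st j).2 ∈ K (st j).1 ∧ ∀ i, (st j).1 < i → (st j).2 ∉ K i := by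
    intro j
    induction j with
    | zero =>
      exact ⟨Nat.sSup_mem ⟨0, hp⟩ hS, fun i hi => notMem_of_csSup_lt (s := {i | p ∈ K i}) hi hS⟩
    | succ j ih =>
      rw [hst]
      exact ⟨hmem _ _ ih.1 ih.2, fun i hi hwi => disjoint_left.1 (hdisj _ _ ih.1 ih.2 i hi)
        (harc _ _ ih.1 ih.2).right_mem hwi⟩
  refine ⟨fun j => (st j).1, fun j => (st j).2, fun j => A (st j).1 (st j).2,
    strictMono_nat_of_lt_succ fun j => ?_, rfl, fun j => ?_⟩
  all_goals simp only [hst]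
  · exact hlt _ _ (hinv j).1 (hinv j).2
  · have h := hinv j
    exact ⟨hsub _ _ h.1 h.2, harc _ _ h.1 h.2, hhit _ _ h.1 h.2, hdisj _ _ h.1 h.2⟩

theorem exists_isArcWith_of_isClosed_chain (hK : ∀ n, ArcConnected (K n))
    (hKc : ∀ n, IsClosed (K n)) (hchain : ∀ n, (K n ∩ K (n + 1)).Nonempty) (hx : ∀ n, x ∉ K n)
    (hlim : Tendsto K atTop (𝓝 x).smallSets) {p : X} (hp : p ∈ K 0) :
    ∃ J ⊆ insert x (⋃ n, K n), IsArcWith J p x := by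
  obtain ⟨m, w, J, hm, rfl, hJ⟩ := exists_seq_subarc_to_last_meeting hK hKc hchain hx hlim hp
  have hJdisj : ∀ j l, j < l → J j ∩ J l ⊆ {w l} := by
    intro j l hjl
    rcases (Nat.succ_le_of_lt hjl).eq_or_lt with rfl | hjl'
    · exact (inter_subset_inter_right _ (hJ _).1).trans (hJ j).2.2.1
    · have hdisj := ((hJ j).2.2.2 _ (hm hjl')).mono_right (hJ l).1
      exact (disjoint_iff_inter_eq_empty.1 hdisj).symm ▸ empty_subset _
  refine ⟨_, insert_subset_insert (iUnion_mono' fun j => ⟨_, (hJ j).1⟩),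
    isArcWith_insert_iUnion (fun j => (hJ j).2.1) hJdisj (fun j hj => hx _ ((hJ j).1 hj)) ?_⟩
  exact (hlim.comp hm.tendsto_atTop).smallSets_mono (Eventually.of_forall fun j => (hJ j).1)

end ChainToLimit

section T2

variable {X : Type*} [TopologicalSpace X] [T2Space X]

theorem ArcConnected.exists_isClosed_subset {H : Set X} (hH : ArcConnected H) {a b : X}
    (ha : a ∈ H) (hb : b ∈ H) : ∃ K ⊆ H, IsClosed K ∧ ArcConnected K ∧ a ∈ K ∧ b ∈ K := by
  rcases eq_or_ne a b with rfl | hab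
  · exact ⟨{a}, singleton_subset_iff.2 ha, isClosed_singleton, arcConnected_singleton a, rfl, rfl⟩
  · obtain ⟨J, hJH, hJ⟩ := hH a ha b hb hab
    exact ⟨J, hJH, hJ.isCompact.isClosed, hJ.arcConnected, hJ.left_mem, hJ.right_mem⟩

theorem exists_isArcWith_of_chain {H : ℕ → Set X} {x : X} (hH : ∀ n, ArcConnected (H n))
    (hchain : ∀ n, (H n ∩ H (n + 1)).Nonempty) (hx : ∀ n, x ∉ H n)
    (hlim : Tendsto H atTop (𝓝 x).smallSets) {p : X} (hp : p ∈ ⋃ n, H n) :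
    ∃ J ⊆ insert x (⋃ n, H n), IsArcWith J p x := by
  obtain ⟨i, hpi⟩ := mem_iUnion.1 hp
  choose c hc using hchain
  set v : ℕ → X := fun n => Nat.casesOn n p fun n => c (n + i)
  have hv : ∀ n, v n ∈ H (n + i) := fun n => by
    cases n with
    | zero => simpa [v] using hpi
    | succ n => simpa [v, add_right_comm] using (hc (n + i)).2
  choose K hKH hKc hK hvK hvK' using
    fun n => (hH (n + i)).exists_isClosed_subset (hv n) (hc (n + i)).1
  obtain ⟨J, hJ, harc⟩ := exists_isArcWith_of_isClosed_chain hK hKc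
    (fun n => ⟨c (n + i), hvK' n, hvK (n + 1)⟩) (fun n hxK => hx _ (hKH n hxK))
    ((hlim.comp (tendsto_add_atTop_nat i)).smallSets_mono (Eventually.of_forall hKH)) (hvK 0)
  exact ⟨J, hJ.trans (insert_subset_insert (iUnion_mono' fun n => ⟨_, hKH n⟩)), harc⟩

theorem ArcConnected.insert_iUnion {H : ℕ → Set X} {x : X} (hH : ∀ n, ArcConnected (H n))
    (hchain : ∀ n, (H n ∩ H (n + 1)).Nonempty) (hlim : Tendsto H atTop (𝓝 x).smallSets) :
    ArcConnected (insert x (⋃ n, H n)) := by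
  have hU := arcConnected_iUnion_of_chain hH hchain
  by_cases hxH : x ∈ ⋃ n, H n
  · rwa [insert_eq_of_mem hxH]
  have hx : ∀ n, x ∉ H n := fun n hxn => hxH (mem_iUnion.2 ⟨n, hxn⟩)
  rintro p (rfl | hp) q (rfl | hq) hpq
  · exact absurd rfl hpq
  · obtain ⟨J, hJ, h⟩ := exists_isArcWith_of_chain hH hchain hx hlim hq
    exact ⟨J, hJ, h.symm⟩
  · exact exists_isArcWith_of_chain hH hchain hx hlim hp
  · obtain ⟨J, hJ, h⟩ := hU p hp q hq hpq
    exact ⟨J, hJ.trans (subset_insert _ _), h⟩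

end T2

theorem tendsto_smallSets_of_tendsto_ediam {X ι : Type*} [PseudoEMetricSpace X] {l : Filter ι}
    {H : ι → Set X} {v : ι → X} {x : X} (hv : Tendsto v l (𝓝 x)) (hvH : ∀ i, v i ∈ H i)
    (hH : Tendsto (fun i => Metric.ediam (H i)) l (𝓝 0)) : Tendsto H l (𝓝 x).smallSets := by
  refine tendsto_smallSets_iff.2 fun U hU => ?_
  obtain ⟨ε, hε, hεU⟩ := EMetric.mem_nhds_iff.1 hU
  have hε2 : 0 < ε / 2 := ENNReal.half_pos hε.ne'
  filter_upwards [EMetric.tendsto_nhds.1 hv _ hε2, (tendsto_order.1 hH).2 _ hε2] with i hvi hHi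
  refine fun y hy => hεU ?_
  calc edist y x ≤ edist y (v i) + edist (v i) x := edist_triangle _ _ _
    _ < ε / 2 + ε / 2 :=
      ENNReal.add_lt_add ((Metric.edist_le_ediam_of_mem hy (hvH i)).trans_lt hHi) hvi
    _ = ε := ENNReal.add_halves ε

section ArcDelta

variable {X : Type*} [MetricSpace X]

theorem arcDelta_le_ediam {x y : X} {H : Set X} (hH : ArcConnected H) (hx : x ∈ H) (hy : y ∈ H) :
    arcDelta x y ≤ Metric.ediam H :=
  sInf_le ⟨H, ⟨hH, hx, hy⟩, rfl⟩

theorem exists_ediam_lt_of_arcDelta_lt {x y : X} {r : ℝ≥0∞} (h : arcDelta x y < r) :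
    ∃ H, ArcConnected H ∧ x ∈ H ∧ y ∈ H ∧ Metric.ediam H < r := by
  obtain ⟨_, ⟨H, ⟨hH, hx, hy⟩, rfl⟩, hr⟩ := sInf_lt_iff.1 h
  exact ⟨H, hH, hx, hy, hr⟩

theorem arcDelta_self (x : X) : arcDelta x x = 0 :=
  nonpos_iff_eq_zero.1 <|
    (arcDelta_le_ediam (arcConnected_singleton x) rfl rfl).trans_eq Metric.ediam_singleton

theorem edist_le_arcDelta (x y : X) : edist x y ≤ arcDelta x y :=
  le_sInf <| by
    rintro _ ⟨H, ⟨-, hx, hy⟩, rfl⟩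
    exact Metric.edist_le_ediam_of_mem hx hy

theorem eq_of_arcDelta_eq_zero {x y : X} (h : arcDelta x y = 0) : x = y :=
  edist_eq_zero.1 (nonpos_iff_eq_zero.1 (h ▸ edist_le_arcDelta x y))

theorem arcDelta_comm (x y : X) : arcDelta x y = arcDelta y x := by
  unfold arcDelta
  congr 2
  ext H
  exact and_congr_right' and_comm

theorem arcDelta_triangle (x y z : X) : arcDelta x z ≤ arcDelta x y + arcDelta y z := by
  simp only [arcDelta, sInf_image, ENNReal.iInf_add, ENNReal.add_iInf]
  refine le_iInf₂ fun H₂ ⟨hH₂, hyH₂, hzH₂⟩ => le_iInf₂ fun H₁ ⟨hH₁, hxH₁, hyH₁⟩ => ?_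
  exact iInf₂_le_of_le (H₁ ∪ H₂) ⟨hH₁.union hH₂ ⟨y, hyH₁, hyH₂⟩, Or.inl hxH₁, Or.inr hzH₂⟩
    (Metric.ediam_union_le ⟨y, hyH₁, hyH₂⟩)

theorem arcDelta_le_two_mul_tsum {v : ℕ → X} {x : X} {b : ℕ → ℝ≥0∞}
    (hv : Tendsto v atTop (𝓝 x)) (hb : ∀ k, arcDelta (v k) (v (k + 1)) < b k) :
    arcDelta (v 0) x ≤ 2 * ∑' k, b k := by
  rcases eq_or_ne (∑' k, b k) ∞ with htop | hfin
  · simp [htop]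
  choose H hH hvH hvH' hdiam using fun k => exists_ediam_lt_of_arcDelta_lt (hb k)
  have hHball : ∀ k, H k ⊆ Metric.closedEBall (v 0) (∑' k, b k) := fun k y hy => by
    have hstep : ∀ i, edist (v i) (v (i + 1)) ≤ b i := fun i =>
      (Metric.edist_le_ediam_of_mem (hvH i) (hvH' i)).trans (hdiam i).le
    calc edist y (v 0) = edist (v 0) y := edist_comm _ _
      _ ≤ edist (v 0) (v k) + edist (v k) y := edist_triangle _ _ _
      _ ≤ ∑ i ∈ Finset.range k, b i + b k :=
          add_le_add (edist_le_range_sum_of_edist_le k fun _ => hstep _)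
            ((Metric.edist_le_ediam_of_mem (hvH k) hy).trans (hdiam k).le)
      _ = ∑ i ∈ Finset.range (k + 1), b i := (Finset.sum_range_succ _ _).symm
      _ ≤ ∑' k, b k := ENNReal.sum_le_tsum _
  have hx : x ∈ Metric.closedEBall (v 0) (∑' k, b k) :=
    Metric.isClosed_closedEBall.mem_of_tendsto hv (Eventually.of_forall fun k => hHball k (hvH k))
  have hlim : Tendsto H atTop (𝓝 x).smallSets :=
    tendsto_smallSets_of_tendsto_ediam hv hvH <|
      tendsto_of_tendsto_of_tendsto_of_le_of_le tendsto_const_nhds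
        (ENNReal.tendsto_atTop_zero_of_tsum_ne_top hfin) (fun _ => zero_le)
        fun k => (hdiam k).le
  have hconn := ArcConnected.insert_iUnion hH (fun k => ⟨v (k + 1), hvH' k, hvH (k + 1)⟩) hlim
  calc arcDelta (v 0) x ≤ Metric.ediam (insert x (⋃ k, H k)) :=
        arcDelta_le_ediam hconn (mem_insert_of_mem _ (mem_iUnion.2 ⟨0, hvH 0⟩)) (mem_insert _ _)
    _ ≤ Metric.ediam (Metric.closedEBall (v 0) (∑' k, b k)) :=
        Metric.ediam_mono (insert_subset hx (iUnion_subset hHball))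
    _ ≤ 2 * ∑' k, b k := Metric.ediam_closedEBall_le

theorem exists_tendsto_arcDelta_of_cauchy [CompleteSpace X] {u : ℕ → X}
    (hu : ∀ ε : ℝ≥0∞, 0 < ε → ∃ N : ℕ, ∀ m ≥ N, ∀ n ≥ N, arcDelta (u m) (u n) < ε) :
    ∃ x : X, Tendsto (fun n => arcDelta (u n) x) atTop (𝓝 0) := by
  obtain ⟨x, hx⟩ := cauchySeq_tendsto_of_complete <| EMetric.cauchySeq_iff.2 fun ε hε =>
    (hu ε hε).imp fun N hN m hm n hn => (edist_le_arcDelta _ _).trans_lt (hN m hm n hn)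
  refine ⟨x, ENNReal.tendsto_atTop_zero.2 fun ε hε => ?_⟩
  set b : ℕ → ℝ≥0∞ := fun k => ε * 2⁻¹ ^ (k + 2)
  obtain ⟨φ, hφ, hφb⟩ := extraction_forall_of_eventually'
    (P := fun k N => ∀ m ≥ N, ∀ n ≥ N, arcDelta (u m) (u n) < b k) fun k =>
      (hu (b k) (ENNReal.mul_pos hε.ne' (by simp))).imp fun N hN N' hN' m hm n hn =>
        hN m (hN'.trans hm) n (hN'.trans hn)
  refine ⟨φ 0, fun n hn => ?_⟩
  have h2 : (2 : ℝ≥0∞) * 2⁻¹ = 1 := ENNReal.mul_inv_cancel two_ne_zero ENNReal.ofNat_ne_top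
  have hsum : 2 * ∑' k, b k = ε := by
    simp only [b, ENNReal.tsum_mul_left, pow_add, ENNReal.tsum_mul_right, ENNReal.tsum_geometric,
      ENNReal.one_sub_inv_two, inv_inv]
    rw [pow_two, ← mul_assoc 2 2⁻¹, h2, one_mul, mul_left_comm, h2, mul_one]
  have := arcDelta_le_two_mul_tsum (v := fun k => u (max n (φ k)))
    (hx.comp (tendsto_atTop_mono (fun k => le_max_right _ _) hφ.tendsto_atTop))
    fun k => hφb k _ (le_max_of_le_right le_rfl) _ (le_max_of_le_right (hφ.monotone k.le_succ))
  simpa only [max_eq_left hn, hsum] using this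

end ArcDelta

/-- Basic properties of the canonical arc-pseudo-metric: it is a pseudo-metric dominating `d`
(hence vanishing only on the diagonal), and it is complete whenever `d` is complete. -/
theorem stmt6 {X : Type*} [MetricSpace X] :
    (∀ x : X, arcDelta x x = 0) ∧
    (∀ x y : X, edist x y ≤ arcDelta x y) ∧
    (∀ x y : X, arcDelta x y = 0 → x = y) ∧
    (∀ x y : X, arcDelta x y = arcDelta y x) ∧
    (∀ x y z : X, arcDelta x z ≤ arcDelta x y + arcDelta y z) ∧
    (CompleteSpace X → ∀ u : ℕ → X,
      (∀ ε : ℝ≥0∞, 0 < ε → ∃ N : ℕ, ∀ m ≥ N, ∀ n ≥ N, arcDelta (u m) (u n) < ε) →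
      ∃ x : X, Filter.Tendsto (fun n => arcDelta (u n) x) Filter.atTop (nhds 0)) :=
  ⟨arcDelta_self, edist_le_arcDelta, fun _ _ => eq_of_arcDelta_eq_zero, arcDelta_comm,
    arcDelta_triangle, fun _ _ => exists_tendsto_arcDelta_of_cauchy⟩
end

section
/- Let (X,d) be a metric space and let δ be its canonical arc-pseudo-metric. Then for every x₀ ∈ X and every real r with 0 < r < ∞, the open δ-ball B = { y ∈ X : δ(x₀,y) < r } is arc-connected: any two distinct points of B are the endpoints of an arc contained in B. -/
/-!
Two points `x, y` of the ball lie, together with `x₀`, in arc-connected sets `H₁ ∋ x` and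
`H₂ ∋ y` of diameter `< r`, and both sets lie inside the ball. It remains to join `x` to `y`
by an arc in `H₁ ∪ H₂`. The concatenation of an arc from `x` to `x₀` with one from `x₀` to
`y` need not be injective, but following the first arc only up to its first hitting time of
the second one (which exists because the second arc is compact, hence closed), and the second
arc from that point on, gives an arc.
-/

open Set TopologicalSpace MeasureTheory
open scoped ENNReal

open Function unitInterval

lemma Set.Icc.convexComb_injective {a b : ℝ} {x y : Icc a b} (h : x ≠ y) :
    Injective (Icc.convexComb x y) := by
  intro u v huv
  have hdiff : ((y : ℝ) - x) ≠ 0 := sub_ne_zero.2 fun h' => h (Subtype.ext h'.symm)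
  have huv' := congrArg Subtype.val huv
  simp only [Icc.coe_convexComb] at huv'
  exact Subtype.ext (mul_right_cancel₀ hdiff (by linarith))

namespace Path

variable {X : Type*} [TopologicalSpace X] {a b c : X}

lemma isArcWith_range {γ : Path a b} (hγ : Injective γ) : IsArcWith (range γ) a b :=
  ⟨γ, γ.continuous, hγ, rfl, γ.source, γ.target⟩

lemma subpath_injective {γ : Path a b} (hγ : Injective γ) {t₀ t₁ : I} (h : t₀ ≠ t₁) :
    Injective (γ.subpath t₀ t₁) :=
  hγ.comp (Icc.convexComb_injective h)

lemma range_subpath_subset (γ : Path a b) (t₀ t₁ : I) : range (γ.subpath t₀ t₁) ⊆ range γ := by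
  rw [range_subpath]
  exact image_subset_range _ _

lemma trans_injective {p : Path a b} {q : Path b c} (hp : Injective p) (hq : Injective q)
    (hpq : range p ∩ range q ⊆ {b}) : Injective (p.trans q) := by
  have meet : ∀ u v, p u = q v → v = 0 := fun u v h =>
    hq (by rw [q.source]; exact hpq ⟨h ▸ mem_range_self u, mem_range_self v⟩)
  intro s t hst
  rw [trans_apply, trans_apply] at hst
  split_ifs at hst with hs ht ht
  · have := congrArg Subtype.val (hp hst)
    exact Subtype.ext (by simp only at this; linarith)
  · have := congrArg Subtype.val (meet _ _ hst)
    simp only [Icc.coe_zero] at this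
    linarith
  · have := congrArg Subtype.val (meet _ _ hst.symm)
    simp only [Icc.coe_zero] at this
    linarith
  · have := congrArg Subtype.val (hq hst)
    exact Subtype.ext (by simp only at this; linarith)

end Path

lemma IsArcWith.exists_path {X : Type*} [TopologicalSpace X] {J : Set X} {a b : X}
    (h : IsArcWith J a b) : ∃ γ : Path a b, Injective γ ∧ range γ = J := by
  obtain ⟨f, hf, hinj, rfl, rfl, rfl⟩ := h
  exact ⟨⟨⟨f, hf⟩, rfl, rfl⟩, hinj, rfl⟩

lemma IsArcWith.exists_subset_union {X : Type*} [TopologicalSpace X] [T2Space X]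
    {J₁ J₂ : Set X} {x z y : X} (h₁ : IsArcWith J₁ x z) (h₂ : IsArcWith J₂ z y)
    (hxy : x ≠ y) : ∃ J ⊆ J₁ ∪ J₂, IsArcWith J x y := by
  obtain ⟨γ₁, hγ₁, rfl⟩ := h₁.exists_path
  obtain ⟨γ₂, hγ₂, rfl⟩ := h₂.exists_path
  have hT : IsCompact (γ₁ ⁻¹' range γ₂) :=
    ((isCompact_range γ₂.continuous).isClosed.preimage γ₁.continuous).isCompact
  obtain ⟨t₀, ⟨s₀, hs₀⟩, ht₀⟩ := hT.exists_isLeast ⟨1, 0, by simp⟩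
  -- `t₀` is the first time `γ₁` meets the range of `γ₂`, and `γ₂ s₀ = γ₁ t₀`.
  by_cases ht₀_zero : t₀ = 0
  · have hγx : γ₂ s₀ = x := by rw [hs₀, ht₀_zero, γ₁.source]
    have hs₁ : s₀ ≠ 1 := by rintro rfl; exact hxy (hγx.symm.trans γ₂.target)
    refine ⟨_, (γ₂.range_subpath_subset s₀ 1).trans subset_union_right, ?_⟩
    simpa only [hγx, γ₂.target] using Path.isArcWith_range (Path.subpath_injective hγ₂ hs₁)
  by_cases hs₀_one : s₀ = 1
  · have hγy : γ₁ t₀ = y := by rw [← hs₀, hs₀_one, γ₂.target]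
    refine ⟨_, (γ₁.range_subpath_subset 0 t₀).trans subset_union_left, ?_⟩
    simpa only [hγy, γ₁.source] using
      Path.isArcWith_range (Path.subpath_injective hγ₁ (Ne.symm ht₀_zero))
  set p := γ₁.subpath 0 t₀
  set q := (γ₂.subpath s₀ 1).cast hs₀.symm rfl
  have hpq : range p ∩ range q ⊆ {γ₁ t₀} := by
    rintro w ⟨hwp, hwq⟩
    rw [Path.range_subpath_of_le _ _ _ nonneg'] at hwp
    obtain ⟨t, ht, rfl⟩ := hwp
    have ht' : t₀ ≤ t := ht₀ (Path.range_subpath_subset _ _ _ (by simpa [q] using hwq))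
    rw [le_antisymm ht.2 ht', mem_singleton_iff]
  have hinj : Injective (p.trans q) :=
    Path.trans_injective (Path.subpath_injective hγ₁ (Ne.symm ht₀_zero))
      (by simpa [q] using Path.subpath_injective hγ₂ hs₀_one) hpq
  refine ⟨_, ?_, by simpa only [γ₁.source, γ₂.target] using Path.isArcWith_range hinj⟩
  rw [Path.trans_range]
  exact union_subset_union (γ₁.range_subpath_subset _ _) (by simp [q])

lemma ArcConnected.exists_subset_union {X : Type*} [TopologicalSpace X] [T2Space X]
    {S T : Set X} {x y z : X} (hS : ArcConnected S) (hT : ArcConnected T) (hz : z ∈ S ∩ T)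
    (hx : x ∈ S) (hy : y ∈ T) (hxy : x ≠ y) : ∃ J ⊆ S ∪ T, IsArcWith J x y := by
  by_cases hxz : x = z
  · subst hxz
    obtain ⟨J, hJ, hJxy⟩ := hT x hz.2 y hy hxy
    exact ⟨J, hJ.trans subset_union_right, hJxy⟩
  by_cases hzy : z = y
  · subst hzy
    obtain ⟨J, hJ, hJxy⟩ := hS x hx z hz.1 hxy
    exact ⟨J, hJ.trans subset_union_left, hJxy⟩
  obtain ⟨J₁, hJ₁, hxz'⟩ := hS x hx z hz.1 hxz
  obtain ⟨J₂, hJ₂, hzy'⟩ := hT z hz.2 y hy hzy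
  obtain ⟨J, hJ, hJxy⟩ := hxz'.exists_subset_union hzy' hxy
  exact ⟨J, hJ.trans (union_subset_union hJ₁ hJ₂), hJxy⟩

lemma ArcConnected.union_s8 {X : Type*} [TopologicalSpace X] [T2Space X] {S T : Set X}
    (hS : ArcConnected S) (hT : ArcConnected T) (hST : (S ∩ T).Nonempty) :
    ArcConnected (S ∪ T) := by
  obtain ⟨z, hz⟩ := hST
  rintro x (hx | hx) y (hy | hy) hxy
  · obtain ⟨J, hJ, hJxy⟩ := hS x hx y hy hxy
    exact ⟨J, hJ.trans subset_union_left, hJxy⟩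
  · exact hS.exists_subset_union hT hz hx hy hxy
  · rw [union_comm]
    exact hT.exists_subset_union hS (inter_comm S T ▸ hz) hx hy hxy
  · obtain ⟨J, hJ, hJxy⟩ := hT x hx y hy hxy
    exact ⟨J, hJ.trans subset_union_right, hJxy⟩

section arcDelta

variable {X : Type*} [MetricSpace X]

lemma arcDelta_lt_iff {x y : X} {r : ℝ≥0∞} :
    arcDelta x y < r ↔ ∃ H, ArcConnected H ∧ x ∈ H ∧ y ∈ H ∧ Metric.ediam H < r := by
  simp only [arcDelta, sInf_lt_iff, mem_image, mem_ofPred_eq]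
  constructor
  · rintro ⟨_, ⟨H, ⟨hH, hx, hy⟩, rfl⟩, hr⟩
    exact ⟨H, hH, hx, hy, hr⟩
  · rintro ⟨H, hH, hx, hy, hr⟩
    exact ⟨_, ⟨H, ⟨hH, hx, hy⟩, rfl⟩, hr⟩

lemma ArcConnected.subset_arcDelta_ball {x₀ : X} {r : ℝ≥0∞} {H : Set X}
    (hH : ArcConnected H) (hx₀ : x₀ ∈ H) (hr : Metric.ediam H < r) :
    H ⊆ {y | arcDelta x₀ y < r} :=
  fun _ hy => arcDelta_lt_iff.2 ⟨H, hH, hx₀, hy, hr⟩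

end arcDelta

theorem stmt8_general {X : Type*} [MetricSpace X] (x₀ : X) (r : ℝ≥0∞) :
    ArcConnected {y : X | arcDelta x₀ y < r} := by
  intro x hx y hy hxy
  obtain ⟨H₁, hH₁, hx₀₁, hx₁, hd₁⟩ := arcDelta_lt_iff.1 hx
  obtain ⟨H₂, hH₂, hx₀₂, hy₂, hd₂⟩ := arcDelta_lt_iff.1 hy
  obtain ⟨J, hJ, hJxy⟩ := hH₁.union_s8 hH₂ ⟨x₀, hx₀₁, hx₀₂⟩ x (Or.inl hx₁) y (Or.inr hy₂) hxy
  exact ⟨J, hJ.trans (union_subset (hH₁.subset_arcDelta_ball hx₀₁ hd₁)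
    (hH₂.subset_arcDelta_ball hx₀₂ hd₂)), hJxy⟩

/-- Every open `δ`-ball of finite positive radius is arc-connected. -/
theorem stmt8 {X : Type*} [MetricSpace X] (x₀ : X) (r : ℝ≥0∞) (hr : 0 < r) (hr' : r ≠ ⊤) :
    ArcConnected {y : X | arcDelta x₀ y < r} :=
  stmt8_general x₀ r
end

section
/- Let X and Y be Polish spaces and let Z ⊆ X × Y be an analytic set, with projection π(Z) = { x ∈ X : ∃ y, (x,y) ∈ Z }. Then there exists a function f : X → Option Y which is measurable from the σ-algebra on X generated by the analytic subsets of X to the Borel σ-algebra of Option Y (Y with a point * adjoined), such that for every x ∈ X: f(x) = * if and only if x ∉ π(Z), and if x ∈ π(Z) then f(x) = y for some y ∈ Y with (x,y) ∈ Z. -/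
/-!
Write the analytic set as `Z = range F` with `F : ℕ^ℕ → X × Y` continuous and put `p = fst ∘ F`.
For `x` in the projection `range p`, choose digits greedily: at each step take the least digit
such that `x` still lies in the image under `p` of the corresponding cylinder. These images are
analytic, so each choice is Σ-measurable in `x`; the resulting leftmost branch `ω` is a limit of
points of the closed fibre `p ⁻¹' {x}`, hence lies in it, and `(F ω).2` is the selected point.
-/

open Set TopologicalSpace MeasureTheory

/-- The Borel σ-algebra on `Option Y` (`Y` with an extra point `*` adjoined): generated by
`{*}` together with the images in `Option Y` of the Borel subsets of `Y`. -/
def optionMS (Y : Type*) [MeasurableSpace Y] : MeasurableSpace (Option Y) :=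
  MeasurableSpace.generateFrom
    ({({none} : Set (Option Y))} ∪ {s | ∃ t : Set Y, MeasurableSet t ∧ s = Option.some '' t})

open Filter Topology PiNat

namespace PiNat

variable {α : Type*} [TopologicalSpace α]

theorem isOpen_setOf_res_eq [DiscreteTopology α] (l : List α) :
    IsOpen {ω : ℕ → α | res ω l.length = l} := by
  induction l with
  | nil => simp
  | cons a l ih =>
    have : {ω : ℕ → α | res ω (a :: l).length = a :: l} =
        (fun ω => ω l.length) ⁻¹' {a} ∩ {ω | res ω l.length = l} := by
      ext ω; simp
    rw [this]
    exact ((isOpen_discrete _).preimage (continuous_apply _)).inter ih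

theorem tendsto_of_res_eq {u : ℕ → ℕ → α} {ω : ℕ → α} (h : ∀ n, res (u n) n = res ω n) :
    Tendsto u atTop (𝓝 ω) := by
  refine tendsto_pi_nhds.2 fun i => tendsto_const_nhds.congr' ?_
  filter_upwards [eventually_gt_atTop i] with n hn
  exact (res_eq_res.1 (h n) hn).symm

end PiNat

namespace Uniformization

variable {X : Type*} (p : (ℕ → ℕ) → X)

-- `res ω n = [ω (n - 1), …, ω 0]`: a prefix is read backwards, its head is the last digit chosen.
def imagePrefix (l : List ℕ) : Set X := p '' {ω | res ω l.length = l}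

variable {p}

theorem imagePrefix_nil : imagePrefix p [] = range p := by
  simp [imagePrefix]

theorem exists_mem_imagePrefix_cons {x : X} {l : List ℕ} (h : x ∈ imagePrefix p l) :
    ∃ m, x ∈ imagePrefix p (m :: l) := by
  obtain ⟨ω, hω, rfl⟩ := h
  exact ⟨ω l.length, ω, by simpa using hω, rfl⟩

theorem analyticSet_imagePrefix [TopologicalSpace X] (hp : Continuous p) (l : List ℕ) :
    AnalyticSet (imagePrefix p l) :=
  (isOpen_setOf_res_eq l).analyticSet_image hp

variable (p)

theorem exists_nextDigit (x : X) (l : List ℕ) :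
    ∃ m, x ∈ imagePrefix p (m :: l) ∨ x ∉ imagePrefix p l := by
  by_cases h : x ∈ imagePrefix p l
  · exact (exists_mem_imagePrefix_cons h).imp fun _ => Or.inl
  · exact ⟨0, Or.inr h⟩

open Classical in
-- The disjunct `x ∉ imagePrefix p l` only makes the search total.
noncomputable def nextDigit (x : X) (l : List ℕ) : ℕ :=
  Nat.find (exists_nextDigit p x l)

noncomputable def branchPrefix (x : X) : ℕ → List ℕ
  | 0 => []
  | n + 1 => nextDigit p x (branchPrefix x n) :: branchPrefix x n

noncomputable def leftmostBranch (x : X) (n : ℕ) : ℕ :=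
  nextDigit p x (branchPrefix p x n)

variable {p}

theorem res_leftmostBranch (x : X) (n : ℕ) : res (leftmostBranch p x) n = branchPrefix p x n := by
  induction n with
  | zero => rfl
  | succ n ih => rw [res_succ, ih]; rfl

open Classical in
theorem mem_imagePrefix_branchPrefix {x : X} (hx : x ∈ range p) (n : ℕ) :
    x ∈ imagePrefix p (branchPrefix p x n) := by
  induction n with
  | zero => rwa [branchPrefix, imagePrefix_nil]
  | succ n ih => exact (Nat.find_spec (exists_nextDigit p x _)).resolve_right (not_not.2 ih)

theorem apply_leftmostBranch [TopologicalSpace X] [T1Space X] (hp : Continuous p) {x : X}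
    (hx : x ∈ range p) : p (leftmostBranch p x) = x := by
  choose u hu hpu using mem_imagePrefix_branchPrefix hx
  have hres : ∀ n, res (u n) n = res (leftmostBranch p x) n := fun n => by
    simpa [← res_leftmostBranch] using hu n
  exact (isClosed_singleton.preimage hp).mem_of_tendsto (tendsto_of_res_eq hres)
    (Eventually.of_forall hpu)

section Measurable

variable [MeasurableSpace X]

open Classical in
theorem measurable_nextDigit (hp : ∀ l, MeasurableSet (imagePrefix p l)) (l : List ℕ) :
    Measurable fun x => nextDigit p x l :=
  measurable_find _ fun m => (hp (m :: l)).union (hp l).compl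

theorem measurableSet_branchPrefix_eq (hp : ∀ l, MeasurableSet (imagePrefix p l)) (n : ℕ)
    (l : List ℕ) : MeasurableSet {x | branchPrefix p x n = l} := by
  induction n generalizing l with
  | zero => exact MeasurableSet.const ([] = l)
  | succ n ih =>
    cases l with
    | nil => simp [branchPrefix]
    | cons m l =>
      have : {x | branchPrefix p x (n + 1) = m :: l} =
          {x | branchPrefix p x n = l} ∩ (fun x => nextDigit p x l) ⁻¹' {m} := by
        ext x
        simp only [branchPrefix, mem_ofPred_eq, mem_inter_iff, mem_preimage, mem_singleton_iff]
        grind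
      rw [this]
      exact (ih l).inter (measurable_nextDigit hp l (measurableSet_singleton m))

theorem measurable_leftmostBranch (hp : ∀ l, MeasurableSet (imagePrefix p l)) :
    Measurable (leftmostBranch p) := by
  refine measurable_pi_lambda _ fun n => measurable_to_countable' fun m => ?_
  have : (fun x => leftmostBranch p x n) ⁻¹' {m} =
      ⋃ l, {x | branchPrefix p x n = l} ∩ (fun x => nextDigit p x l) ⁻¹' {m} := by
    ext x; simp [leftmostBranch]
  rw [this]
  exact .iUnion fun l => (measurableSet_branchPrefix_eq hp n l).inter
    (measurable_nextDigit hp l (measurableSet_singleton m))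

end Measurable

end Uniformization

theorem measurable_optionMS_ite {X Y : Type*} [MeasurableSpace X] [MeasurableSpace Y] {s : Set X}
    [DecidablePred (· ∈ s)] (hs : MeasurableSet s) {g : X → Y} (hg : Measurable g) :
    @Measurable X (Option Y) _ (optionMS Y) fun x => if x ∈ s then some (g x) else none := by
  refine measurable_generateFrom ?_
  rintro t (rfl | ⟨u, hu, rfl⟩)
  · convert hs.compl using 1
    ext x; by_cases hx : x ∈ s <;> simp [hx]
  · convert hs.inter (hg hu) using 1
    ext x; by_cases hx : x ∈ s <;> simp [hx]

open Uniformization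

theorem stmt12_general {X Y : Type*} [TopologicalSpace X] [PolishSpace X]
    [TopologicalSpace Y] [MeasurableSpace Y] [BorelSpace Y]
    (Z : Set (X × Y)) (hZ : AnalyticSet Z) :
    ∃ f : X → Option Y,
      @Measurable X (Option Y)
        (MeasurableSpace.generateFrom {s : Set X | AnalyticSet s}) (optionMS Y) f ∧
      ∀ x : X, (f x = none ↔ ¬ ∃ y : Y, (x, y) ∈ Z) ∧
        (∀ y : Y, f x = some y → (x, y) ∈ Z) := by
  classical
  let _ : MeasurableSpace X := MeasurableSpace.generateFrom {s : Set X | AnalyticSet s}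
  have measurableSet_of_analyticSet {s : Set X} (hs : AnalyticSet s) : MeasurableSet s :=
    MeasurableSpace.measurableSet_generateFrom hs
  rw [AnalyticSet] at hZ
  rcases hZ with rfl | ⟨F, hF, rfl⟩
  · exact ⟨fun _ => none, measurable_const, by simp⟩
  set p := Prod.fst ∘ F
  have hp : Continuous p := continuous_fst.comp hF
  have mem_range_p (x : X) : x ∈ range p ↔ ∃ y, (x, y) ∈ range F := by
    simp [p, Prod.ext_iff, eq_comm]
  refine ⟨fun x => if x ∈ range p then some (F (leftmostBranch p x)).2 else none,
    measurable_optionMS_ite (measurableSet_of_analyticSet (analyticSet_range_of_polishSpace hp))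
      ((continuous_snd.comp hF).measurable.comp (measurable_leftmostBranch fun l =>
        measurableSet_of_analyticSet (analyticSet_imagePrefix hp l))), fun x => ?_⟩
  by_cases hx : x ∈ range p
  · refine ⟨by simpa [hx] using (mem_range_p x).1 hx, fun y hy => ?_⟩
    simp only [hx, if_true, Option.some.injEq] at hy
    exact ⟨leftmostBranch p x, Prod.ext (apply_leftmostBranch hp hx) hy⟩
  · simpa [hx] using (mem_range_p x).not.1 hx

/-- A Σ-measurable uniformization of an analytic set, extended by `*` off the projection
(Yankov–von Neumann selection together with Lemma on `Option`-valued extensions). -/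
theorem stmt12 {X Y : Type*} [TopologicalSpace X] [PolishSpace X]
    [TopologicalSpace Y] [PolishSpace Y] [MeasurableSpace Y] [BorelSpace Y]
    (Z : Set (X × Y)) (hZ : AnalyticSet Z) :
    ∃ f : X → Option Y,
      @Measurable X (Option Y)
        (MeasurableSpace.generateFrom {s : Set X | AnalyticSet s}) (optionMS Y) f ∧
      ∀ x : X, (f x = none ↔ ¬ ∃ y : Y, (x, y) ∈ Z) ∧
        (∀ y : Y, f x = some y → (x, y) ∈ Z) :=
  stmt12_general Z hZ
end
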